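/- arXiv:2103.15310 — 3 statements merged into one kernel-verified Lean document; each statement's English description precedes it below -/
import Mathlib

section
/- Let $\ell = (\ell_n)_{n\in\mathbb{N}}$ be a stick-breaking process on $[0,1]$, i.e. $L_0 = 1$, $L_n = L_{n-1} U_n$ and $\ell_n = L_{n-1} - L_n$ where $(U_n)$ are i.i.d. uniform on $(0,1)$. Then for every $c > 0$ and $n \in \mathbb{N}$, $0 \le n + \int_0^1 x^{-1}(e^{cx}-1)\,dx - \sum_{k=1}^n \mathbb{E}[e^{c\ell_k}] \le 2^{-n} \int_0^1 x^{-1}(e^{cx}-1)\,dx$. -/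
/-!
Write `g s = ∫₀¹ (exp (s x) - 1) / x dx` (`expSubOneIntegral s`). For `s ≥ 0` and `u` uniform
on `(0, 1)`, `E[exp (s (1 - u))] + E[g (s u)] = 1 + g s`: by Fubini, `∫₀¹ g (s u) du` is the
integral of `((exp (s x) - 1) / (s x) - 1) / x`, which differs from the integrand of `g s` by the
derivative of `-(exp (s x) - 1) / (s x)`. Since `U (k + 1)` is independent of `L k`, applying this
with `s = c L k` gives `E[exp (c ℓ (k + 1))] + E[g (c L (k + 1))] = 1 + E[g (c L k)]`, which
telescopes: the quantity in the theorem is `E[g (c L n)] ≥ 0`. Convexity of `exp` gives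
`g (s t) ≤ t g s` for `t ∈ [0, 1]`, so it is at most `E[L n] g c = 2⁻ⁿ g c`.
-/

open MeasureTheory ProbabilityTheory Real Set Filter Topology

lemma Real.exp_sub_one_le_mul_exp (y : ℝ) : exp y - 1 ≤ y * exp y := by
  have h := mul_le_mul_of_nonneg_left (add_one_le_exp (-y)) (exp_pos y).le
  rw [← exp_add, add_neg_cancel, exp_zero] at h
  linarith

lemma Real.one_le_exp_sub_one_div {y : ℝ} (hy : 0 < y) : 1 ≤ (exp y - 1) / y := by
  rw [le_div_iff₀ hy]
  linarith [add_one_le_exp y]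

lemma Real.exp_sub_one_div_le_exp {y : ℝ} (hy : 0 < y) : (exp y - 1) / y ≤ exp y := by
  rw [div_le_iff₀ hy, mul_comm]
  exact exp_sub_one_le_mul_exp y

lemma exp_mul_sub_one_div_mem_Icc {s x : ℝ} (hs : 0 ≤ s) (hx : x ∈ Ioo (0 : ℝ) 1) :
    (exp (s * x) - 1) / x ∈ Icc 0 (s * exp s) := by
  obtain ⟨hx0, hx1⟩ := hx
  have hsx : 0 ≤ s * x := by positivity
  refine ⟨div_nonneg (by linarith [one_le_exp hsx]) hx0.le, ?_⟩
  rw [div_le_iff₀ hx0]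
  calc exp (s * x) - 1 ≤ s * x * exp (s * x) := exp_sub_one_le_mul_exp _
    _ ≤ s * x * exp s := by gcongr; nlinarith
    _ = s * exp s * x := by ring

lemma integrableOn_exp_mul_sub_one_div {s : ℝ} (hs : 0 ≤ s) :
    IntegrableOn (fun x ↦ (exp (s * x) - 1) / x) (Ioo 0 1) := by
  refine IntegrableOn.of_bound (by simp) (by fun_prop : Measurable _).aestronglyMeasurable
    (s * exp s) ?_
  filter_upwards [ae_restrict_mem measurableSet_Ioo] with x hx
  obtain ⟨h0, h1⟩ := exp_mul_sub_one_div_mem_Icc hs hx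
  rwa [norm_of_nonneg h0]

lemma integral_exp_mul_Ioo {b : ℝ} (hb : b ≠ 0) :
    ∫ u in Ioo (0 : ℝ) 1, exp (b * u) = (exp b - 1) / b := by
  rw [← integral_Ioc_eq_integral_Ioo, ← intervalIntegral.integral_of_le zero_le_one,
    intervalIntegral.integral_comp_mul_left _ hb, integral_exp]
  simp [div_eq_inv_mul]

noncomputable def expSubOneIntegral (s : ℝ) : ℝ := ∫ x in Ioo (0 : ℝ) 1, (exp (s * x) - 1) / x

@[fun_prop]
lemma measurable_expSubOneIntegral : Measurable expSubOneIntegral :=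
  (Measurable.stronglyMeasurable (by fun_prop :
    Measurable fun p : ℝ × ℝ ↦ (exp (p.1 * p.2) - 1) / p.2)).integral_prod_right'.measurable

lemma expSubOneIntegral_nonneg {s : ℝ} (hs : 0 ≤ s) : 0 ≤ expSubOneIntegral s :=
  setIntegral_nonneg measurableSet_Ioo fun _ hx ↦ (exp_mul_sub_one_div_mem_Icc hs hx).1

lemma expSubOneIntegral_mul_le {s t : ℝ} (hs : 0 ≤ s) (ht₀ : 0 ≤ t) (ht₁ : t ≤ 1) :
    expSubOneIntegral (s * t) ≤ t * expSubOneIntegral s := by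
  rw [expSubOneIntegral, expSubOneIntegral, ← integral_const_mul]
  refine setIntegral_mono_on (integrableOn_exp_mul_sub_one_div (by positivity))
    ((integrableOn_exp_mul_sub_one_div hs).const_mul t) measurableSet_Ioo fun x hx ↦ ?_
  rw [mul_div_assoc']
  gcongr
  · exact hx.1.le
  -- convexity of `exp` between `0` and `s * x`
  have h := convexOn_exp.2 (mem_univ (s * x)) (mem_univ 0) ht₀ (by linarith : 0 ≤ 1 - t)
    (by ring)
  simp only [smul_eq_mul, mul_zero, add_zero, exp_zero, mul_one] at h
  rw [show s * t * x = t * (s * x) by ring]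
  linarith

lemma integrableOn_exp_mul_sub_one_div_mul_sub_one_div {s : ℝ} (hs : 0 < s) :
    IntegrableOn (fun x ↦ ((exp (s * x) - 1) / (s * x) - 1) / x) (Ioo 0 1) := by
  refine (integrableOn_exp_mul_sub_one_div hs.le).mono'
    (by fun_prop : Measurable _).aestronglyMeasurable ?_
  filter_upwards [ae_restrict_mem measurableSet_Ioo] with x hx
  have hsx : 0 < s * x := mul_pos hs hx.1
  rw [norm_of_nonneg (div_nonneg (by linarith [one_le_exp_sub_one_div hsx]) hx.1.le)]
  gcongr
  · exact hx.1.le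
  linarith [exp_sub_one_div_le_exp hsx]

lemma tendsto_exp_mul_sub_one_div_mul {s : ℝ} (hs : s ≠ 0) :
    Tendsto (fun x ↦ (exp (s * x) - 1) / (s * x)) (𝓝[>] 0) (𝓝 1) := by
  -- the slope of `x ↦ exp (s * x)` at `0` tends to its derivative `s`
  have h := ((hasDerivAt_exp (s * 0)).comp 0
    (by simpa using (hasDerivAt_id (0 : ℝ)).const_mul s)).tendsto_slope_zero_right.div_const s
  simp only [mul_zero, exp_zero, one_mul, zero_add, smul_eq_mul, Function.comp_apply,
    div_self hs] at h
  refine h.congr fun x ↦ ?_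
  ring

lemma integral_exp_mul_sub_one_div_mul_sub_one_div {s : ℝ} (hs : 0 < s) :
    ∫ x in Ioo (0 : ℝ) 1, ((exp (s * x) - 1) / (s * x) - 1) / x
      = 1 - (exp s - 1) / s + expSubOneIntegral s := by
  set F : ℝ → ℝ := fun x ↦ -((exp (s * x) - 1) / (s * x))
  have hderiv : ∀ x ∈ Ioo (0 : ℝ) 1,
      HasDerivAt F (((exp (s * x) - 1) / (s * x) - 1) / x - (exp (s * x) - 1) / x) x := by
    intro x hx
    have hx0 : x ≠ 0 := hx.1.ne'
    have hsx : s * x ≠ 0 := (mul_pos hs hx.1).ne'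
    have hlin : HasDerivAt (fun x ↦ s * x) s x := by simpa using (hasDerivAt_id x).const_mul s
    have hnum : HasDerivAt (fun x ↦ exp (s * x) - 1) (exp (s * x) * s) x :=
      ((hasDerivAt_exp _).comp x hlin).sub_const 1
    refine (hnum.div hlin hsx).neg.congr_deriv ?_
    field_simp
    ring
  have hlim₀ : Tendsto F (𝓝[>] 0) (𝓝 (-1)) := (tendsto_exp_mul_sub_one_div_mul hs.ne').neg
  have hlim₁ : Tendsto F (𝓝[<] 1) (𝓝 (-((exp s - 1) / s))) := by
    have hF : ContinuousAt F 1 := by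
      refine (ContinuousAt.div (by fun_prop) (by fun_prop) ?_).neg
      simpa using hs.ne'
    simpa [F] using hF.continuousWithinAt.tendsto
  have hA := integrableOn_exp_mul_sub_one_div_mul_sub_one_div hs
  have hB := integrableOn_exp_mul_sub_one_div hs.le
  have hFTC := intervalIntegral.integral_eq_sub_of_hasDerivAt_of_tendsto zero_lt_one hderiv
    ((intervalIntegrable_iff_integrableOn_Ioo_of_le zero_le_one).2 (hA.sub hB)) hlim₀ hlim₁
  rw [intervalIntegral.integral_of_le zero_le_one, integral_Ioc_eq_integral_Ioo,
    integral_sub hA hB] at hFTC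
  rw [expSubOneIntegral]
  linarith

lemma integral_expSubOneIntegral_mul {s : ℝ} (hs : 0 < s) :
    ∫ u in Ioo (0 : ℝ) 1, expSubOneIntegral (s * u)
      = 1 - (exp s - 1) / s + expSubOneIntegral s := by
  have hint : Integrable (Function.uncurry fun u x : ℝ ↦ (exp (s * u * x) - 1) / x)
      ((volume.restrict (Ioo (0 : ℝ) 1)).prod (volume.restrict (Ioo (0 : ℝ) 1))) := by
    rw [Measure.prod_restrict]
    refine IntegrableOn.of_bound (by simp [Measure.prod_prod])
      (by fun_prop : Measurable _).aestronglyMeasurable (s * exp s) ?_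
    filter_upwards [ae_restrict_mem (measurableSet_Ioo.prod measurableSet_Ioo)]
      with p ⟨hu, hx⟩
    have hsu : 0 ≤ s * p.1 := by nlinarith [hu.1]
    obtain ⟨h0, h1⟩ := exp_mul_sub_one_div_mem_Icc hsu hx
    rw [Function.uncurry_apply_pair, norm_of_nonneg h0]
    refine h1.trans ?_
    have : s * p.1 ≤ s := by nlinarith [hu.2]
    gcongr
  rw [← integral_exp_mul_sub_one_div_mul_sub_one_div hs]
  simp only [expSubOneIntegral]
  rw [integral_integral_swap hint]
  refine setIntegral_congr_fun measurableSet_Ioo fun x hx ↦ ?_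
  have hsx : 0 < s * x := mul_pos hs hx.1
  simp only [integral_div]
  simp_rw [show ∀ u, s * u * x = s * x * u from fun u ↦ by ring]
  rw [integral_sub (f := fun u ↦ exp (s * x * u)) (g := fun _ ↦ 1)
    ((by fun_prop : Continuous _).integrableOn_Icc.mono_set Ioo_subset_Icc_self)
    (integrableOn_const (by simp)), integral_exp_mul_Ioo hsx.ne']
  simp

lemma integral_exp_mul_one_sub_add_expSubOneIntegral_mul {s : ℝ} (hs : 0 ≤ s) :
    ∫ u in Ioo (0 : ℝ) 1, (exp (s * (1 - u)) + expSubOneIntegral (s * u))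
      = 1 + expSubOneIntegral s := by
  rcases hs.eq_or_lt with rfl | hs
  · simp [expSubOneIntegral]
  have hexp : ∫ u in Ioo (0 : ℝ) 1, exp (s * (1 - u)) = (exp s - 1) / s := by
    simp_rw [show ∀ u, s * (1 - u) = s + -s * u from fun u ↦ by ring, exp_add]
    rw [integral_const_mul, integral_exp_mul_Ioo (neg_ne_zero.2 hs.ne'), exp_neg]
    field_simp
    ring
  have hg : IntegrableOn (fun u ↦ expSubOneIntegral (s * u)) (Ioo 0 1) := by
    refine IntegrableOn.of_bound (by simp)
      (measurable_expSubOneIntegral.comp (measurable_const_mul s)).aestronglyMeasurable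
      (expSubOneIntegral s) ?_
    filter_upwards [ae_restrict_mem measurableSet_Ioo] with u hu
    rw [norm_of_nonneg (expSubOneIntegral_nonneg (by nlinarith [hu.1]))]
    calc expSubOneIntegral (s * u) ≤ u * expSubOneIntegral s :=
          expSubOneIntegral_mul_le hs.le hu.1.le hu.2.le
      _ ≤ expSubOneIntegral s := mul_le_of_le_one_left (expSubOneIntegral_nonneg hs.le) hu.2.le
  rw [integral_add _ hg, hexp, integral_expSubOneIntegral_mul hs]
  · ring
  · exact (by fun_prop : Continuous fun u ↦ exp (s * (1 - u))).integrableOn_Icc.mono_set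
      Ioo_subset_Icc_self

lemma ProbabilityTheory.IndepFun.integral_comp_eq_integral_integral_map {Ω α β E : Type*}
    {mΩ : MeasurableSpace Ω} {P : Measure Ω} [IsFiniteMeasure P] [MeasurableSpace α]
    [MeasurableSpace β] [NormedAddCommGroup E] [NormedSpace ℝ E] {X : Ω → α} {Y : Ω → β}
    (hX : Measurable X) (hY : Measurable Y) (hXY : IndepFun X Y P) {Φ : α × β → E}
    (hΦ : StronglyMeasurable Φ) (hint : Integrable (fun ω ↦ Φ (X ω, Y ω)) P) :
    ∫ ω, Φ (X ω, Y ω) ∂P = ∫ ω, ∫ y, Φ (X ω, y) ∂(P.map Y) ∂P := by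
  have hmap : P.map (fun ω ↦ (X ω, Y ω)) = (P.map X).prod (P.map Y) :=
    (indepFun_iff_map_prod_eq_prod_map_map hX.aemeasurable hY.aemeasurable).1 hXY
  have hXY' : Measurable fun ω ↦ (X ω, Y ω) := hX.prodMk hY
  have hΦint : Integrable Φ ((P.map X).prod (P.map Y)) := by
    rw [← hmap]
    exact (integrable_map_measure hΦ.aestronglyMeasurable hXY'.aemeasurable).2 hint
  rw [← integral_map hXY'.aemeasurable hΦ.aestronglyMeasurable, hmap, integral_prod Φ hΦint,
    integral_map hX.aemeasurable]
  exact hΦ.integral_prod_right'.aestronglyMeasurable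

structure IsStickBreaking {Ω : Type*} [MeasurableSpace Ω] (P : Measure Ω) (U L : ℕ → Ω → ℝ) :
    Prop where
  measurable_U : ∀ n, Measurable (U n)
  iIndepFun_U : iIndepFun U P
  map_U : ∀ n, P.map (U n) = volume.restrict (Ioo 0 1)
  L_zero : ∀ ω, L 0 ω = 1
  L_succ : ∀ n ω, L (n + 1) ω = L n ω * U (n + 1) ω

namespace IsStickBreaking

variable {Ω : Type*} [MeasurableSpace Ω] {P : Measure Ω} {U L : ℕ → Ω → ℝ}

lemma measurable_L (h : IsStickBreaking P U L) (k : ℕ) : Measurable (L k) := by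
  induction k with
  | zero => rw [funext h.L_zero]; exact measurable_const
  | succ k ih => rw [funext (h.L_succ k)]; exact ih.mul (h.measurable_U (k + 1))

lemma ae_mem_Ioo (h : IsStickBreaking P U L) : ∀ᵐ ω ∂P, ∀ i, U i ω ∈ Ioo 0 1 :=
  ae_all_iff.2 fun i ↦ ae_of_ae_map (h.measurable_U i).aemeasurable <| by
    rw [h.map_U i]
    exact ae_restrict_mem measurableSet_Ioo

lemma ae_mem_Ioc (h : IsStickBreaking P U L) : ∀ᵐ ω ∂P, ∀ k, L k ω ∈ Ioc 0 1 := by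
  filter_upwards [h.ae_mem_Ioo] with ω hω k
  induction k with
  | zero => simp [h.L_zero ω]
  | succ k ih =>
    rw [h.L_succ k ω]
    obtain ⟨hU₀, hU₁⟩ := hω (k + 1)
    exact ⟨mul_pos ih.1 hU₀, mul_le_one₀ ih.2 hU₀.le hU₁.le⟩

lemma L_eq_prod (h : IsStickBreaking P U L) (k : ℕ) : L k = ∏ j ∈ Finset.Icc 1 k, U j := by
  induction k with
  | zero => ext ω; simp [h.L_zero ω]
  | succ k ih =>
    ext ω
    rw [h.L_succ k ω, ih, Finset.prod_Icc_succ_top (by omega)]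
    simp [Finset.prod_apply]

lemma indepFun_L_U (h : IsStickBreaking P U L) (k : ℕ) : IndepFun (L k) (U (k + 1)) P := by
  rw [h.L_eq_prod k]
  exact h.iIndepFun_U.indepFun_finsetProd_of_notMem h.measurable_U (by simp)

lemma integral_U [IsProbabilityMeasure P] (h : IsStickBreaking P U L) (n : ℕ) :
    ∫ ω, U n ω ∂P = 2⁻¹ := by
  rw [← integral_map (f := fun x ↦ x) (h.measurable_U n).aemeasurable
    aestronglyMeasurable_id, h.map_U n,
    ← integral_Ioc_eq_integral_Ioo, ← intervalIntegral.integral_of_le zero_le_one, integral_id]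
  norm_num

lemma integrable_U [IsFiniteMeasure P] (h : IsStickBreaking P U L) (n : ℕ) :
    Integrable (U n) P := by
  refine .of_bound (h.measurable_U n).aestronglyMeasurable 1 ?_
  filter_upwards [h.ae_mem_Ioo] with ω hω
  rw [norm_of_nonneg (hω n).1.le]
  exact (hω n).2.le

lemma integrable_L [IsFiniteMeasure P] (h : IsStickBreaking P U L) (k : ℕ) :
    Integrable (L k) P := by
  refine .of_bound (h.measurable_L k).aestronglyMeasurable 1 ?_
  filter_upwards [h.ae_mem_Ioc] with ω hω
  rw [norm_of_nonneg (hω k).1.le]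
  exact (hω k).2

lemma integral_L [IsProbabilityMeasure P] (h : IsStickBreaking P U L) (k : ℕ) :
    ∫ ω, L k ω ∂P = 2 ^ (-(k : ℤ)) := by
  induction k with
  | zero => simp [h.L_zero]
  | succ k ih =>
    rw [funext (h.L_succ k), (h.indepFun_L_U k).integral_fun_mul_eq_mul_integral
      (h.integrable_L k).1 (h.integrable_U _).1, ih, h.integral_U]
    simp only [zpow_neg, zpow_natCast, pow_succ, mul_inv]

lemma integrable_expSubOneIntegral_mul_L [IsFiniteMeasure P] (h : IsStickBreaking P U L)
    {c : ℝ} (hc : 0 ≤ c) (k : ℕ) : Integrable (fun ω ↦ expSubOneIntegral (c * L k ω)) P := by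
  refine Integrable.of_bound (measurable_expSubOneIntegral.comp
    ((h.measurable_L k).const_mul c)).aestronglyMeasurable (expSubOneIntegral c) ?_
  filter_upwards [h.ae_mem_Ioc] with ω hω
  obtain ⟨hL₀, hL₁⟩ := hω k
  rw [norm_of_nonneg (expSubOneIntegral_nonneg (by positivity))]
  exact (expSubOneIntegral_mul_le hc hL₀.le hL₁).trans
    (mul_le_of_le_one_left (expSubOneIntegral_nonneg hc) hL₁)

variable {ℓ : ℕ → Ω → ℝ}

lemma integral_exp_mul_succ_add [IsProbabilityMeasure P] (h : IsStickBreaking P U L)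
    (hℓ : ∀ n ω, ℓ (n + 1) ω = L n ω - L (n + 1) ω) {c : ℝ} (hc : 0 ≤ c) (k : ℕ) :
    ∫ ω, exp (c * ℓ (k + 1) ω) ∂P + ∫ ω, expSubOneIntegral (c * L (k + 1) ω) ∂P
      = 1 + ∫ ω, expSubOneIntegral (c * L k ω) ∂P := by
  set Φ : ℝ × ℝ → ℝ := fun p ↦ exp (c * p.1 * (1 - p.2)) + expSubOneIntegral (c * p.1 * p.2)
  have hΦ : ∀ ω, exp (c * ℓ (k + 1) ω) + expSubOneIntegral (c * L (k + 1) ω)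
      = Φ (L k ω, U (k + 1) ω) := by
    intro ω
    simp only [Φ, hℓ, h.L_succ]
    ring_nf
  have hℓmeas : Measurable (ℓ (k + 1)) := by
    rw [funext (hℓ k)]
    exact (h.measurable_L k).sub (h.measurable_L (k + 1))
  have hexp : Integrable (fun ω ↦ exp (c * ℓ (k + 1) ω)) P := by
    refine .of_bound (hℓmeas.const_mul c).exp.aestronglyMeasurable (exp c) ?_
    filter_upwards [h.ae_mem_Ioc] with ω hω
    rw [norm_of_nonneg (exp_pos _).le, hℓ]
    gcongr
    nlinarith [(hω k).2, (hω (k + 1)).1]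
  have hint : Integrable (fun ω ↦ Φ (L k ω, U (k + 1) ω)) P := by
    simp_rw [← hΦ]
    exact hexp.add (h.integrable_expSubOneIntegral_mul_L hc (k + 1))
  rw [← integral_add hexp (h.integrable_expSubOneIntegral_mul_L hc _)]
  simp_rw [hΦ]
  rw [(h.indepFun_L_U k).integral_comp_eq_integral_integral_map (h.measurable_L k)
    (h.measurable_U _) (by fun_prop : Measurable Φ).stronglyMeasurable hint, h.map_U]
  calc ∫ ω, (∫ u in Ioo (0 : ℝ) 1, Φ (L k ω, u)) ∂P
      = ∫ ω, (1 + expSubOneIntegral (c * L k ω)) ∂P := by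
        refine integral_congr_ae ?_
        filter_upwards [h.ae_mem_Ioc] with ω hω
        exact integral_exp_mul_one_sub_add_expSubOneIntegral_mul (mul_nonneg hc (hω k).1.le)
    _ = 1 + ∫ ω, expSubOneIntegral (c * L k ω) ∂P := by
        rw [integral_add (integrable_const 1) (h.integrable_expSubOneIntegral_mul_L hc k)]
        simp

lemma sum_integral_exp_mul [IsProbabilityMeasure P] (h : IsStickBreaking P U L)
    (hℓ : ∀ n ω, ℓ (n + 1) ω = L n ω - L (n + 1) ω) {c : ℝ} (hc : 0 ≤ c) (n : ℕ) :
    ∑ k ∈ Finset.Icc 1 n, ∫ ω, exp (c * ℓ k ω) ∂P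
      = n + expSubOneIntegral c - ∫ ω, expSubOneIntegral (c * L n ω) ∂P := by
  induction n with
  | zero => simp [h.L_zero]
  | succ n ih =>
    rw [Finset.sum_Icc_succ_top (by omega), ih]
    have := h.integral_exp_mul_succ_add hℓ hc n
    push_cast
    linarith

lemma integral_expSubOneIntegral_mul_L_le [IsProbabilityMeasure P] (h : IsStickBreaking P U L)
    {c : ℝ} (hc : 0 ≤ c) (n : ℕ) :
    ∫ ω, expSubOneIntegral (c * L n ω) ∂P ≤ 2 ^ (-(n : ℤ)) * expSubOneIntegral c := by
  rw [← h.integral_L, ← integral_mul_const]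
  refine integral_mono_ae (h.integrable_expSubOneIntegral_mul_L hc n)
    ((h.integrable_L n).mul_const _) ?_
  filter_upwards [h.ae_mem_Ioc] with ω hω
  exact expSubOneIntegral_mul_le hc (hω n).1.le (hω n).2

end IsStickBreaking

/-- Stick-breaking process on `[0,1]`: `L 0 = 1`, `L (n+1) = L n * U (n+1)`,
`ℓ (n+1) = L n - L (n+1)`, with `(U n)` i.i.d. uniform on `(0,1)`.  Then for every
`c > 0` and `n : ℕ`,
`0 ≤ n + ∫_0^1 x⁻¹ (e^{cx} - 1) dx - ∑_{k=1}^n E[e^{c ℓ k}]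
   ≤ 2⁻ⁿ ∫_0^1 x⁻¹ (e^{cx} - 1) dx`. -/
theorem stmt_0 {Ω : Type*} [MeasurableSpace Ω] (P : Measure Ω) [IsProbabilityMeasure P]
    (U : ℕ → Ω → ℝ) (hUmeas : ∀ n, Measurable (U n))
    (hUindep : iIndepFun U P)
    (hUunif : ∀ n, Measure.map (U n) P = volume.restrict (Ioo (0 : ℝ) 1))
    (L ℓ : ℕ → Ω → ℝ)
    (hL0 : ∀ ω, L 0 ω = 1)
    (hL : ∀ n ω, L (n + 1) ω = L n ω * U (n + 1) ω)
    (hℓ : ∀ n ω, ℓ (n + 1) ω = L n ω - L (n + 1) ω)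
    (c : ℝ) (hc : 0 < c) (n : ℕ) :
    0 ≤ (n : ℝ) + (∫ x in Ioo (0 : ℝ) 1, (Real.exp (c * x) - 1) / x)
        - ∑ k ∈ Finset.Icc 1 n, ∫ ω, Real.exp (c * ℓ k ω) ∂P ∧
    (n : ℝ) + (∫ x in Ioo (0 : ℝ) 1, (Real.exp (c * x) - 1) / x)
        - ∑ k ∈ Finset.Icc 1 n, ∫ ω, Real.exp (c * ℓ k ω) ∂P
      ≤ 2 ^ (-(n : ℤ)) * ∫ x in Ioo (0 : ℝ) 1, (Real.exp (c * x) - 1) / x := by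
  have h : IsStickBreaking P U L := ⟨hUmeas, hUindep, hUunif, hL0, hL⟩
  change 0 ≤ (n : ℝ) + expSubOneIntegral c - _ ∧
    (n : ℝ) + expSubOneIntegral c - _ ≤ 2 ^ (-(n : ℤ)) * expSubOneIntegral c
  rw [h.sum_integral_exp_mul hℓ hc.le n, sub_sub_cancel]
  refine ⟨integral_nonneg_of_ae ?_, h.integral_expSubOneIntegral_mul_L_le hc.le n⟩
  filter_upwards [h.ae_mem_Ioc] with ω hω
  exact expSubOneIntegral_nonneg (mul_nonneg hc.le (hω n).1.le)
end

section
/- For a stick-breaking process $\ell = (\ell_n)$ on $[0,1]$ based on the uniform law, the $n$-th stick length $\ell_n$ has probability density $x \mapsto \log(1/x)^{n-1}/(n-1)!$ on $(0,1)$. -/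
/-!
Write `ℓ (n + 1) = L n * (1 - U (n + 1))`. Since `1 - U (n + 1)` is again uniform and independent
of `L n = U 1 * ⋯ * U n`, the stick `ℓ (n + 1)` has the same law as `L (n + 1)`. Multiplying a
variable with density `f` on `(0,1)` by an independent uniform gives the density
`t ↦ ∫_t^1 f x / x dx`, and this transform sends `log (1/x) ^ k / k!` to
`log (1/x) ^ (k + 1) / (k + 1)!`.
-/

open MeasureTheory ProbabilityTheory Real Set
open scoped ENNReal Nat

noncomputable def uniformIooDensity (x t : ℝ) : ℝ≥0∞ :=
  (Ioo 0 x).indicator (fun _ => ENNReal.ofReal x⁻¹) t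

theorem measurable_uniformIooDensity : Measurable (Function.uncurry uniformIooDensity) := by
  change Measurable ({p : ℝ × ℝ | 0 < p.2 ∧ p.2 < p.1}.indicator fun p => ENNReal.ofReal p.1⁻¹)
  exact Measurable.indicator (by fun_prop) <|
    (measurableSet_lt measurable_const measurable_snd).inter
      (measurableSet_lt measurable_snd measurable_fst)

theorem map_const_mul_restrict_Ioo {x : ℝ} (hx : 0 < x) :
    (volume.restrict (Ioo (0 : ℝ) 1)).map (x * ·) = volume.withDensity (uniformIooDensity x) := by
  have hpre : (x * ·) ⁻¹' Ioo 0 x = Ioo (0 : ℝ) 1 := by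
    rw [preimage_const_mul_Ioo₀ _ _ hx, zero_div, div_self hx.ne']
  have hind : uniformIooDensity x = (Ioo 0 x).indicator fun _ => ENNReal.ofReal x⁻¹ := rfl
  rw [hind, withDensity_indicator measurableSet_Ioo, withDensity_const, ← hpre,
    ← Measure.restrict_map (measurable_const_mul x) measurableSet_Ioo,
    Real.map_volume_mul_left hx.ne', abs_of_pos (inv_pos.mpr hx), Measure.restrict_smul]

theorem map_one_sub_restrict_Ioo :
    (volume.restrict (Ioo (0 : ℝ) 1)).map (1 - ·) = volume.restrict (Ioo (0 : ℝ) 1) := by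
  have hmp : MeasurePreserving (1 - ·) (volume : Measure ℝ) volume :=
    Measure.measurePreserving_sub_left volume 1
  have hpre : (1 - ·) ⁻¹' Ioo 0 1 = Ioo (0 : ℝ) 1 := by
    rw [preimage_const_sub_Ioo]
    norm_num
  conv_lhs => rw [← hpre]
  rw [← Measure.restrict_map hmp.measurable measurableSet_Ioo, hmp.map_eq]

theorem withDensity_mconv_restrict_Ioo {f : ℝ → ℝ≥0∞} (hf : Measurable f)
    (hf0 : ∀ x ≤ 0, f x = 0) :
    volume.withDensity f ∗ₘ volume.restrict (Ioo (0 : ℝ) 1)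
      = volume.withDensity (fun t => ∫⁻ x, f x * uniformIooDensity x t) := by
  have hF : Measurable (Function.uncurry fun x t => f x * uniformIooDensity x t) :=
    (hf.comp measurable_fst).mul measurable_uniformIooDensity
  have hdens : Measurable fun t => ∫⁻ x, f x * uniformIooDensity x t := hF.lintegral_prod_left'
  refine Measure.ext_of_lintegral _ fun ψ hψ => ?_
  have hψ_mul : Measurable fun x => ∫⁻ y in Ioo 0 1, ψ (x * y) :=
    (hψ.comp measurable_mul).lintegral_prod_right'
  have inner (x : ℝ) : f x * ∫⁻ y in Ioo 0 1, ψ (x * y)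
      = ∫⁻ t, f x * uniformIooDensity x t * ψ t := by
    rcases le_or_gt x 0 with hx | hx
    · simp [hf0 x hx]
    rw [← lintegral_map hψ (measurable_const_mul x), map_const_mul_restrict_Ioo hx,
      lintegral_withDensity_eq_lintegral_mul _ (measurable_uniformIooDensity.of_uncurry_left) hψ,
      ← lintegral_const_mul _ (measurable_uniformIooDensity.of_uncurry_left.mul hψ)]
    simp only [Pi.mul_apply, mul_assoc]
  rw [Measure.lintegral_mconv hψ, lintegral_withDensity_eq_lintegral_mul _ hf hψ_mul,
    lintegral_withDensity_eq_lintegral_mul _ hdens hψ]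
  simp only [Pi.mul_apply, inner]
  rw [lintegral_lintegral_swap (hF.mul (hψ.comp measurable_snd)).aemeasurable]
  exact lintegral_congr fun t => lintegral_mul_const _ hF.of_uncurry_right

theorem hasDerivAt_log_one_div_pow_div_factorial (k : ℕ) {x : ℝ} (hx : 0 < x) :
    HasDerivAt (fun x : ℝ => -(log (1 / x) ^ (k + 1) / (k + 1)!))
      (log (1 / x) ^ k / k ! * x⁻¹) x := by
  have hlog : HasDerivAt (fun x : ℝ => log (1 / x)) (-x⁻¹) x := by
    have h : (fun x : ℝ => log (1 / x)) = fun x => -log x := by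
      funext y
      rw [one_div, log_inv]
    exact h ▸ (hasDerivAt_log hx.ne').neg
  refine ((hlog.pow (k + 1)).div_const ((k + 1)! : ℝ)).neg.congr_deriv ?_
  rw [Nat.add_sub_cancel, Nat.factorial_succ]
  push_cast
  field_simp

theorem lintegral_Ioo_log_one_div_pow_div_factorial (k : ℕ) {t : ℝ} (ht : 0 < t) (ht1 : t ≤ 1) :
    ∫⁻ x in Ioo t 1, ENNReal.ofReal (log (1 / x) ^ k / k ! * x⁻¹)
      = ENNReal.ofReal (log (1 / t) ^ (k + 1) / (k + 1)!) := by
  have hcont : ContinuousOn (fun x : ℝ => log (1 / x) ^ k / k ! * x⁻¹) (Icc t 1) := by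
    intro x hx
    have hx0 : x ≠ 0 := (ht.trans_le hx.1).ne'
    exact (((continuousAt_const.div continuousAt_id hx0).log (by simpa using hx0)).pow k
      |>.div_const _ |>.mul (continuousAt_inv₀ hx0)).continuousWithinAt
  have hnonneg : ∀ᵐ x ∂volume.restrict (Ioo t 1), 0 ≤ log (1 / x) ^ k / k ! * x⁻¹ := by
    refine (ae_restrict_iff' measurableSet_Ioo).mpr (ae_of_all _ fun x hx => ?_)
    have hx0 : 0 < x := ht.trans hx.1
    have : 0 ≤ log (1 / x) := log_nonneg (one_le_one_div hx0 hx.2.le)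
    positivity
  rw [← ofReal_integral_eq_lintegral_ofReal
      ((hcont.integrableOn_compact isCompact_Icc).mono_set Ioo_subset_Icc_self) hnonneg,
    ← integral_Ioc_eq_integral_Ioo, ← intervalIntegral.integral_of_le ht1,
    intervalIntegral.integral_eq_sub_of_hasDerivAt
      (fun x hx => hasDerivAt_log_one_div_pow_div_factorial k
        (ht.trans_le (uIcc_of_le ht1 ▸ hx).1))
      ((uIcc_of_le ht1 ▸ hcont).intervalIntegrable)]
  simp

noncomputable def stickDensity (k : ℕ) (x : ℝ) : ℝ≥0∞ :=
  ENNReal.ofReal ((Ioo (0 : ℝ) 1).indicator (fun x => log (1 / x) ^ k / k !) x)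

noncomputable def stickLaw (k : ℕ) : Measure ℝ := volume.withDensity (stickDensity k)

theorem measurable_stickDensity (k : ℕ) : Measurable (stickDensity k) :=
  ENNReal.measurable_ofReal.comp (Measurable.indicator (by fun_prop) measurableSet_Ioo)

theorem stickDensity_of_notMem {k : ℕ} {x : ℝ} (hx : x ∉ Ioo (0 : ℝ) 1) :
    stickDensity k x = 0 := by
  simp [stickDensity, indicator_of_notMem hx]

theorem stickLaw_zero : stickLaw 0 = volume.restrict (Ioo (0 : ℝ) 1) := by
  rw [stickLaw, ← withDensity_indicator_one measurableSet_Ioo]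
  congr 1
  funext x
  by_cases hx : x ∈ Ioo (0 : ℝ) 1 <;> simp [stickDensity, hx]

theorem lintegral_stickDensity_mul_uniformIooDensity (k : ℕ) (t : ℝ) :
    ∫⁻ x, stickDensity k x * uniformIooDensity x t = stickDensity (k + 1) t := by
  rcases le_or_gt t 0 with ht | ht
  · have hnot (x : ℝ) : t ∉ Ioo 0 x := fun h => ht.not_gt h.1
    simp [uniformIooDensity, hnot, stickDensity_of_notMem (fun h : t ∈ Ioo 0 1 => hnot 1 h)]
  have hint : (fun x => stickDensity k x * uniformIooDensity x t)
      = (Ioo t 1).indicator fun x => ENNReal.ofReal (log (1 / x) ^ k / k ! * x⁻¹) := by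
    funext x
    by_cases hx : x ∈ Ioo t 1
    · have hx0 : 0 < x := ht.trans hx.1
      have hlog : 0 ≤ log (1 / x) := log_nonneg (one_le_one_div hx0 hx.2.le)
      rw [indicator_of_mem hx, stickDensity, uniformIooDensity,
        indicator_of_mem (show x ∈ Ioo (0 : ℝ) 1 from ⟨hx0, hx.2⟩),
        indicator_of_mem (show t ∈ Ioo 0 x from ⟨ht, hx.1⟩), ← ENNReal.ofReal_mul (by positivity)]
    · rw [indicator_of_notMem hx]
      rcases le_or_gt x t with hxt | htx
      · simp [uniformIooDensity, fun h : t < x => hxt.not_gt h]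
      · rw [stickDensity_of_notMem fun h => hx ⟨htx, h.2⟩, zero_mul]
  rw [hint, lintegral_indicator measurableSet_Ioo]
  rcases lt_or_ge t 1 with ht1 | ht1
  · rw [lintegral_Ioo_log_one_div_pow_div_factorial k ht ht1.le, stickDensity,
      indicator_of_mem (show t ∈ Ioo (0 : ℝ) 1 from ⟨ht, ht1⟩)]
  · rw [Ioo_eq_empty ht1.not_gt, Measure.restrict_empty, lintegral_zero_measure,
      stickDensity_of_notMem fun h => ht1.not_gt h.2]

theorem stickLaw_mconv_restrict_Ioo (k : ℕ) :
    stickLaw k ∗ₘ volume.restrict (Ioo (0 : ℝ) 1) = stickLaw (k + 1) := by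
  rw [stickLaw, withDensity_mconv_restrict_Ioo (measurable_stickDensity k)
    fun x hx => stickDensity_of_notMem fun h => hx.not_gt h.1]
  simp only [lintegral_stickDensity_mul_uniformIooDensity, stickLaw]

section StickBreaking

variable {Ω : Type*} {U L : ℕ → Ω → ℝ}

theorem remainder_eq_prod (hL0 : ∀ ω, L 0 ω = 1) (hL : ∀ n ω, L (n + 1) ω = L n ω * U (n + 1) ω)
    (k : ℕ) : L k = ∏ j ∈ (Finset.range k).image (· + 1), U j := by
  rw [Finset.prod_image fun _ _ _ _ h => Nat.succ_injective h]
  induction k with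
  | zero => funext ω; simp [hL0]
  | succ k ih => funext ω; rw [Finset.prod_range_succ, Pi.mul_apply, ← ih, hL]

variable [MeasurableSpace Ω] {P : Measure Ω}

theorem indepFun_remainder (hU : ∀ n, Measurable (U n)) (hindep : iIndepFun U P)
    (hL0 : ∀ ω, L 0 ω = 1) (hL : ∀ n ω, L (n + 1) ω = L n ω * U (n + 1) ω)
    {k m : ℕ} (hkm : k < m) : IndepFun (L k) (U m) P := by
  rw [remainder_eq_prod hL0 hL k]
  refine hindep.indepFun_finsetProd_of_notMem hU fun hm => ?_
  obtain ⟨j, hj, rfl⟩ := Finset.mem_image.mp hm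
  exact (Finset.mem_range.mp hj).not_ge (by omega)

theorem measurable_remainder (hU : ∀ n, Measurable (U n)) (hL0 : ∀ ω, L 0 ω = 1)
    (hL : ∀ n ω, L (n + 1) ω = L n ω * U (n + 1) ω) (k : ℕ) : Measurable (L k) := by
  rw [remainder_eq_prod hL0 hL k, Finset.prod_fn]
  exact Finset.measurable_prod _ fun j _ => hU j

/-- `V` is an arbitrary uniform factor so that this covers both `L (k + 1) = L k * U (k + 1)`
and `ℓ (k + 1) = L k * (1 - U (k + 1))`. -/
theorem map_remainder_mul_uniform [IsProbabilityMeasure P] (hU : ∀ n, Measurable (U n))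
    (hindep : iIndepFun U P) (hUunif : ∀ n, P.map (U n) = volume.restrict (Ioo (0 : ℝ) 1))
    (hL0 : ∀ ω, L 0 ω = 1) (hL : ∀ n ω, L (n + 1) ω = L n ω * U (n + 1) ω)
    (k : ℕ) {V : Ω → ℝ} (hV : Measurable V) (hVunif : P.map V = volume.restrict (Ioo (0 : ℝ) 1))
    (hLV : IndepFun (L k) V P) : P.map (L k * V) = stickLaw k := by
  induction k generalizing V with
  | zero =>
    have hL0V : L 0 * V = V := funext fun ω => by simp [hL0]
    rw [hL0V, hVunif, stickLaw_zero]
  | succ k ih =>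
    have hLk : P.map (L (k + 1)) = stickLaw k := by
      have : L (k + 1) = L k * U (k + 1) := funext (hL k)
      rw [this]
      exact ih (hU _) (hUunif _) (indepFun_remainder hU hindep hL0 hL k.lt_succ_self)
    rw [hLV.map_mul_eq_map_mconv_map (measurable_remainder hU hL0 hL _) hV, hLk, hVunif,
      stickLaw_mconv_restrict_Ioo]

end StickBreaking

/-- For a stick-breaking process on `[0,1]` based on the uniform law, the `n`-th stick
length `ℓ n` (for `n ≥ 1`) has probability density `x ↦ log(1/x)^(n-1)/(n-1)!` on `(0,1)`
with respect to Lebesgue measure. -/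
theorem stmt_1 {Ω : Type*} [MeasurableSpace Ω] (P : Measure Ω) [IsProbabilityMeasure P]
    (U : ℕ → Ω → ℝ) (hUmeas : ∀ n, Measurable (U n))
    (hUindep : iIndepFun U P)
    (hUunif : ∀ n, Measure.map (U n) P = volume.restrict (Ioo (0 : ℝ) 1))
    (L ℓ : ℕ → Ω → ℝ)
    (hL0 : ∀ ω, L 0 ω = 1)
    (hL : ∀ n ω, L (n + 1) ω = L n ω * U (n + 1) ω)
    (hℓ : ∀ n ω, ℓ (n + 1) ω = L n ω - L (n + 1) ω)
    (n : ℕ) (hn : 1 ≤ n) :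
    Measure.map (ℓ n) P
      = volume.withDensity (fun x => ENNReal.ofReal
          ((Ioo (0 : ℝ) 1).indicator
            (fun x => (Real.log (1 / x)) ^ (n - 1) / (Nat.factorial (n - 1))) x)) := by
  obtain ⟨m, rfl⟩ : ∃ m, n = m + 1 := ⟨n - 1, by omega⟩
  change P.map (ℓ (m + 1)) = stickLaw m
  have hℓm : ℓ (m + 1) = L m * (1 - U (m + 1)) := by
    funext ω
    simp only [hℓ, hL, Pi.mul_apply, Pi.sub_apply, Pi.one_apply]
    ring
  have hV : Measurable (1 - U (m + 1)) := measurable_const.sub (hUmeas _)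
  have hVunif : P.map (1 - U (m + 1)) = volume.restrict (Ioo (0 : ℝ) 1) := by
    rw [← map_one_sub_restrict_Ioo, ← hUunif (m + 1),
      Measure.map_map (g := fun x : ℝ => 1 - x) (by fun_prop) (hUmeas _)]
    rfl
  have hLV : IndepFun (L m) (1 - U (m + 1)) P :=
    (indepFun_remainder hUmeas hUindep hL0 hL m.lt_succ_self).comp measurable_id
      (measurable_const.sub measurable_id)
  rw [hℓm]
  exact map_remainder_mul_uniform hUmeas hUindep hUunif hL0 hL m hV hVunif hLV
end

section
/- For every $c > 0$, $\lim_{c \to \infty} c^{-1} e^{-c} (1+c^2) \int_0^1 x^{-1}(e^{cx}-1)\,dx = 1$ and $\lim_{c \to 0^+} c^{-1} e^{-c} (1+c^2) \int_0^1 x^{-1}(e^{cx}-1)\,dx = 1$. -/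
/-!
After the substitution `t = c x` the integral is `G c = ∫ t in 0..c, (exp t - 1) / t`.
For `t > 0` the integrand lies between `1` and `exp t`, which gives `c ≤ G c ≤ exp c - 1` and
hence `G c / c → 1` as `c → 0⁺`. As `c → ∞` the mass of `G c` sits near `t = c`: bounding the
integrand below by `(exp t - 1) / c`, and above by `exp t / s` on `[s, c]` with
`s = c - 2 log c` (the part over `[0, s]` is at most `exp s = exp c / c ^ 2`), squeezes
`c * exp (-c) * G c` between two functions tending to `1`.
-/

open MeasureTheory Real Set Filter Topology

noncomputable def expSubOneDiv (t : ℝ) : ℝ := (exp t - 1) / t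

lemma one_le_expSubOneDiv {t : ℝ} (ht : 0 < t) : 1 ≤ expSubOneDiv t := by
  rw [expSubOneDiv, le_div_iff₀ ht]
  linarith [add_one_le_exp t]

lemma expSubOneDiv_le_exp {t : ℝ} (ht : 0 < t) : expSubOneDiv t ≤ exp t := by
  have h : exp (-t) * exp t = 1 := by rw [← exp_add, neg_add_cancel, exp_zero]
  rw [expSubOneDiv, div_le_iff₀ ht]
  nlinarith [add_one_le_exp (-t), exp_pos t]

lemma expSubOneDiv_le_exp_div {s t : ℝ} (hs : 0 < s) (hst : s ≤ t) :
    expSubOneDiv t ≤ exp t / s := calc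
  expSubOneDiv t ≤ exp t / t := by unfold expSubOneDiv; gcongr <;> linarith
  _ ≤ exp t / s := by gcongr

lemma intervalIntegrable_expSubOneDiv_zero {b : ℝ} (hb : 0 ≤ b) :
    IntervalIntegrable expSubOneDiv volume 0 b := by
  rw [intervalIntegrable_iff_integrableOn_Ioc_of_le hb]
  refine Measure.integrableOn_of_bounded (M := exp b) (by simp) ?_ ?_
  · exact ((measurable_exp.sub_const 1).div measurable_id).aestronglyMeasurable
  filter_upwards [ae_restrict_mem measurableSet_Ioc] with t ⟨ht0, htb⟩
  rw [norm_of_nonneg (zero_le_one.trans (one_le_expSubOneDiv ht0))]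
  exact (expSubOneDiv_le_exp ht0).trans (exp_le_exp.2 htb)

lemma intervalIntegrable_expSubOneDiv {a b : ℝ} (ha : 0 ≤ a) (hb : 0 ≤ b) :
    IntervalIntegrable expSubOneDiv volume a b :=
  (intervalIntegrable_expSubOneDiv_zero ha).symm.trans (intervalIntegrable_expSubOneDiv_zero hb)

lemma setIntegral_Ioo_exp_mul_sub_one_div (c : ℝ) :
    ∫ x in Ioo (0 : ℝ) 1, (exp (c * x) - 1) / x = ∫ t in 0..c, expSubOneDiv t := by
  have h : ∀ x, (exp (c * x) - 1) / x = c * expSubOneDiv (c * x) := by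
    intro x
    rcases eq_or_ne c 0 with rfl | hc
    · simp
    rcases eq_or_ne x 0 with rfl | hx
    · simp [expSubOneDiv]
    rw [expSubOneDiv]
    field_simp
  rw [← integral_Ioc_eq_integral_Ioo, ← intervalIntegral.integral_of_le zero_le_one, funext h,
    intervalIntegral.integral_const_mul, ← smul_eq_mul,
    intervalIntegral.smul_integral_comp_mul_left, mul_zero, mul_one]

lemma le_integral_expSubOneDiv {c : ℝ} (hc : 0 ≤ c) : c ≤ ∫ t in 0..c, expSubOneDiv t := by
  simpa using intervalIntegral.integral_mono_on_of_le_Ioo hc intervalIntegrable_const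
    (intervalIntegrable_expSubOneDiv le_rfl hc) fun t ht => one_le_expSubOneDiv ht.1

lemma integral_expSubOneDiv_le {c : ℝ} (hc : 0 ≤ c) :
    ∫ t in 0..c, expSubOneDiv t ≤ exp c - 1 := by
  simpa using intervalIntegral.integral_mono_on_of_le_Ioo hc
    (intervalIntegrable_expSubOneDiv le_rfl hc) (continuous_exp.intervalIntegrable 0 c)
    fun t ht => expSubOneDiv_le_exp ht.1

lemma exp_sub_one_sub_div_le_integral_expSubOneDiv {c : ℝ} (hc : 0 ≤ c) :
    (exp c - 1 - c) / c ≤ ∫ t in 0..c, expSubOneDiv t := by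
  have hmono := intervalIntegral.integral_mono_on_of_le_Ioo hc
    ((by fun_prop : Continuous fun t => (exp t - 1) / c).intervalIntegrable 0 c)
    (intervalIntegrable_expSubOneDiv le_rfl hc) fun t ht => by
      unfold expSubOneDiv
      gcongr
      · linarith [add_one_le_exp t, ht.1]
      exacts [ht.1, ht.2.le]
  rwa [intervalIntegral.integral_div, intervalIntegral.integral_sub
    (continuous_exp.intervalIntegrable 0 c) intervalIntegrable_const, integral_exp,
    intervalIntegral.integral_const, exp_zero, smul_eq_mul, mul_one, sub_zero] at hmono

lemma integral_expSubOneDiv_le_exp_add_exp_div {s c : ℝ} (hs : 0 < s) (hsc : s ≤ c) :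
    ∫ t in 0..c, expSubOneDiv t ≤ exp s + exp c / s := by
  have hhead := integral_expSubOneDiv_le hs.le
  have htail : ∫ t in s..c, expSubOneDiv t ≤ (exp c - exp s) / s := by
    rw [← integral_exp, ← intervalIntegral.integral_div]
    exact intervalIntegral.integral_mono_on_of_le_Ioo hsc
      (intervalIntegrable_expSubOneDiv hs.le (hs.le.trans hsc))
      ((continuous_exp.div_const s).intervalIntegrable s c)
      fun t ht => expSubOneDiv_le_exp_div hs ht.1.le
  rw [← intervalIntegral.integral_add_adjacent_intervals
    (intervalIntegrable_expSubOneDiv le_rfl hs.le)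
    (intervalIntegrable_expSubOneDiv hs.le (hs.le.trans hsc))]
  have : (exp c - exp s) / s ≤ exp c / s := by gcongr; linarith [exp_pos s]
  linarith

lemma tendsto_integral_expSubOneDiv_div_nhdsGT :
    Tendsto (fun c => (∫ t in 0..c, expSubOneDiv t) / c) (𝓝[>] 0) (𝓝 1) := by
  have hexp : Tendsto exp (𝓝[>] 0) (𝓝 1) := by
    simpa using (continuous_exp.tendsto 0).mono_left nhdsWithin_le_nhds
  refine tendsto_of_tendsto_of_tendsto_of_le_of_le' tendsto_const_nhds hexp ?_ ?_
  all_goals filter_upwards [self_mem_nhdsWithin] with c (hc : 0 < c)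
  · rw [le_div_iff₀ hc, one_mul]
    exact le_integral_expSubOneDiv hc.le
  · calc (∫ t in 0..c, expSubOneDiv t) / c ≤ expSubOneDiv c := by
          unfold expSubOneDiv; gcongr; exact integral_expSubOneDiv_le hc.le
      _ ≤ exp c := expSubOneDiv_le_exp hc

lemma tendsto_mul_exp_neg_mul_integral_expSubOneDiv_atTop :
    Tendsto (fun c => c * exp (-c) * ∫ t in 0..c, expSubOneDiv t) atTop (𝓝 1) := by
  have hlower : Tendsto (fun c => 1 - exp (-c) - c * exp (-c)) atTop (𝓝 1) := by
    have hmul : Tendsto (fun c => c * exp (-c)) atTop (𝓝 0) := by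
      simpa using tendsto_pow_mul_exp_neg_atTop_nhds_zero 1
    simpa using (tendsto_exp_neg_atTop_nhds_zero.const_sub 1).sub hmul
  have hlog : Tendsto (fun c => log c / c) atTop (𝓝 0) :=
    isLittleO_log_id_atTop.tendsto_div_nhds_zero
  have hupper : Tendsto (fun c => c⁻¹ + (1 - 2 * (log c / c))⁻¹) atTop (𝓝 1) := by
    simpa using tendsto_inv_atTop_zero.add
      (((tendsto_const_nhds (x := (1 : ℝ))).sub (hlog.const_mul 2)).inv₀ (by norm_num))
  refine tendsto_of_tendsto_of_tendsto_of_le_of_le' hlower hupper ?_ ?_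
  · filter_upwards [eventually_gt_atTop 0] with c hc
    calc 1 - exp (-c) - c * exp (-c) = c * exp (-c) * ((exp c - 1 - c) / c) := by
          rw [exp_neg]; field_simp
      _ ≤ _ := by gcongr; exact exp_sub_one_sub_div_le_integral_expSubOneDiv hc.le
  · filter_upwards [eventually_ge_atTop 1, (tendsto_order.1 hlog).2 (1 / 4) (by norm_num)]
      with c hc hlogc
    have hc0 : 0 < c := by linarith
    have hlog0 : 0 ≤ log c := log_nonneg hc
    have hlogc' : log c < c / 4 := by rw [div_lt_iff₀ hc0] at hlogc; linarith
    set s := c - 2 * log c with hs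
    have hs0 : 0 < s := by linarith
    have hexp_s : exp s = exp c / c ^ 2 := by
      rw [hs, exp_sub, ← log_rpow hc0, exp_log (by positivity), rpow_two]
    calc c * exp (-c) * ∫ t in 0..c, expSubOneDiv t ≤ c * exp (-c) * (exp s + exp c / s) := by
          gcongr; exact integral_expSubOneDiv_le_exp_add_exp_div hs0 (by linarith)
      _ = c⁻¹ + (1 - 2 * (log c / c))⁻¹ := by
          rw [hexp_s, exp_neg, hs]; field_simp

/-- `c⁻¹ e⁻ᶜ (1+c²) ∫_0^1 x⁻¹(e^{cx}-1) dx → 1` both as `c → ∞` and as `c → 0⁺`. -/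
theorem stmt_3 :
    Tendsto (fun c : ℝ =>
        c⁻¹ * Real.exp (-c) * (1 + c ^ 2) *
          ∫ x in Ioo (0 : ℝ) 1, (Real.exp (c * x) - 1) / x) atTop (nhds 1) ∧
    Tendsto (fun c : ℝ =>
        c⁻¹ * Real.exp (-c) * (1 + c ^ 2) *
          ∫ x in Ioo (0 : ℝ) 1, (Real.exp (c * x) - 1) / x) (nhdsWithin 0 (Ioi 0))
      (nhds 1) := by
  simp only [setIntegral_Ioo_exp_mul_sub_one_div]
  constructor
  · have hfactor : Tendsto (fun c : ℝ => (c ^ 2)⁻¹ + 1) atTop (𝓝 1) := by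
      simpa using ((tendsto_inv_atTop_zero (𝕜 := ℝ)).pow 2).add_const 1
    have h := hfactor.mul tendsto_mul_exp_neg_mul_integral_expSubOneDiv_atTop
    rw [one_mul] at h
    refine h.congr' ?_
    filter_upwards [eventually_gt_atTop 0] with c hc
    field_simp
  · have hfactor : Tendsto (fun c : ℝ => exp (-c) * (1 + c ^ 2)) (𝓝[>] 0) (𝓝 1) := by
      simpa using ((by fun_prop : Continuous fun c : ℝ => exp (-c) * (1 + c ^ 2)).tendsto 0).mono_left
        nhdsWithin_le_nhds
    have h := hfactor.mul tendsto_integral_expSubOneDiv_div_nhdsGT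
    rw [one_mul] at h
    refine h.congr' ?_
    filter_upwards [self_mem_nhdsWithin] with c (hc : 0 < c)
    field_simp
end
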